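/- The symmetric function f : ℕ × ℕ → ℝ defined by f(x,a) = −√(x² + a²) satisfies f(x,a) + f(y,b) ≥ f(y,a) + f(x,b) for all natural numbers x ≥ y and a ≥ b, with strict inequality whenever both x > y and a > b. -/
import Mathlib


/-- The function `f(x,a) = -√(x² + a²)` on pairs of natural numbers, whose
associated index `R_f` is minus the Sombor index. -/
noncomputable def somborF (x a : ℕ) : ℝ :=
  -Real.sqrt ((x : ℝ) ^ 2 + (a : ℝ) ^ 2)

private lemma sombor_key (X Y A B : ℝ) (hY : 0 ≤ Y) (hXY : Y ≤ X)
    (hB : 0 ≤ B) (hAB : B ≤ A) :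
    Real.sqrt (X + A) + Real.sqrt (Y + B) ≤ Real.sqrt (Y + A) + Real.sqrt (X + B) := by
  have hA : 0 ≤ A := hB.trans hAB
  have hX : 0 ≤ X := hY.trans hXY
  have hprod : Real.sqrt (X + A) * Real.sqrt (Y + B) ≤
      Real.sqrt (Y + A) * Real.sqrt (X + B) := by
    rw [← Real.sqrt_mul (by linarith), ← Real.sqrt_mul (by linarith)]
    exact Real.sqrt_le_sqrt (by nlinarith)
  have h1 := Real.sq_sqrt (show (0:ℝ) ≤ X + A by linarith)
  have h2 := Real.sq_sqrt (show (0:ℝ) ≤ Y + B by linarith)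
  have h3 := Real.sq_sqrt (show (0:ℝ) ≤ Y + A by linarith)
  have h4 := Real.sq_sqrt (show (0:ℝ) ≤ X + B by linarith)
  have n1 := Real.sqrt_nonneg (X + A)
  have n2 := Real.sqrt_nonneg (Y + B)
  have n3 := Real.sqrt_nonneg (Y + A)
  have n4 := Real.sqrt_nonneg (X + B)
  nlinarith [sq_nonneg (Real.sqrt (X + A) + Real.sqrt (Y + B) - Real.sqrt (Y + A) - Real.sqrt (X + B))]

private lemma sombor_key_strict (X Y A B : ℝ) (hY : 0 ≤ Y) (hXY : Y < X)
    (hB : 0 ≤ B) (hAB : B < A) :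
    Real.sqrt (X + A) + Real.sqrt (Y + B) < Real.sqrt (Y + A) + Real.sqrt (X + B) := by
  have hA : 0 ≤ A := hB.trans hAB.le
  have hX : 0 ≤ X := hY.trans hXY.le
  have hprod : Real.sqrt (X + A) * Real.sqrt (Y + B) <
      Real.sqrt (Y + A) * Real.sqrt (X + B) := by
    rw [← Real.sqrt_mul (by linarith), ← Real.sqrt_mul (by linarith)]
    exact Real.sqrt_lt_sqrt (by nlinarith) (by nlinarith)
  have h1 := Real.sq_sqrt (show (0:ℝ) ≤ X + A by linarith)
  have h2 := Real.sq_sqrt (show (0:ℝ) ≤ Y + B by linarith)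
  have h3 := Real.sq_sqrt (show (0:ℝ) ≤ Y + A by linarith)
  have h4 := Real.sq_sqrt (show (0:ℝ) ≤ X + B by linarith)
  have n1 := Real.sqrt_nonneg (X + A)
  have n2 := Real.sqrt_nonneg (Y + B)
  have n3 := Real.sqrt_nonneg (Y + A)
  have n4 := Real.sqrt_nonneg (X + B)
  nlinarith [sq_nonneg (Real.sqrt (X + A) + Real.sqrt (Y + B) - Real.sqrt (Y + A) - Real.sqrt (X + B))]

theorem somborF_exchange_condition :
    (∀ x a : ℕ, somborF x a = somborF a x) ∧
    (∀ x y a b : ℕ, x ≥ y → a ≥ b →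
      somborF x a + somborF y b ≥ somborF y a + somborF x b) ∧
    (∀ x y a b : ℕ, x > y → a > b →
      somborF x a + somborF y b > somborF y a + somborF x b) := by
  refine ⟨fun x a => by simp [somborF, add_comm], ?_, ?_⟩
  · intro x y a b hxy hab
    have h1 : ((y:ℝ))^2 ≤ (x:ℝ)^2 := by
      have : (y:ℝ) ≤ x := Nat.cast_le.mpr hxy
      nlinarith [Nat.cast_nonneg (α := ℝ) y]
    have h2 : ((b:ℝ))^2 ≤ (a:ℝ)^2 := by
      have : (b:ℝ) ≤ a := Nat.cast_le.mpr hab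
      nlinarith [Nat.cast_nonneg (α := ℝ) b]
    have := sombor_key ((x:ℝ)^2) ((y:ℝ)^2) ((a:ℝ)^2) ((b:ℝ)^2) (by positivity) h1
      (by positivity) h2
    simp only [somborF]
    linarith
  · intro x y a b hxy hab
    have h1 : ((y:ℝ))^2 < (x:ℝ)^2 := by
      have : (y:ℝ) < x := Nat.cast_lt.mpr hxy
      nlinarith [Nat.cast_nonneg (α := ℝ) y]
    have h2 : ((b:ℝ))^2 < (a:ℝ)^2 := by
      have : (b:ℝ) < a := Nat.cast_lt.mpr hab
      nlinarith [Nat.cast_nonneg (α := ℝ) b]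
    have := sombor_key_strict ((x:ℝ)^2) ((y:ℝ)^2) ((a:ℝ)^2) ((b:ℝ)^2) (by positivity) h1
      (by positivity) h2
    simp only [somborF]
    linarith
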